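/- Let R be a semiprime associative ring. Then every Lie nilpotent one-sided (left or right) ideal I of R is contained in the center Z(R) of R. -/

import Mathlib

/-- `I` is a right ideal of `R` (as an additive subgroup closed under right multiplication). -/
def IsRightIdealSG {R : Type*} [Ring R] (I : AddSubgroup R) : Prop :=
  ∀ i ∈ I, ∀ r : R, i * r ∈ I

/-- `I` is a left ideal of `R`. -/
def IsLeftIdealSG {R : Type*} [Ring R] (I : AddSubgroup R) : Prop :=
  ∀ i ∈ I, ∀ r : R, r * i ∈ I

/-- `I` is a two-sided ideal of `R`. -/
def IsIdealSG {R : Type*} [Ring R] (I : AddSubgroup R) : Prop :=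
  IsLeftIdealSG I ∧ IsRightIdealSG I

/-- Left-normed iterated commutator: `itComm s n = [[...[s 0, s 1],...], s n]`
(a left-normed commutator of `n + 1` elements). -/
def itComm {R : Type*} [Ring R] (s : ℕ → R) : ℕ → R
  | 0 => s 0
  | n + 1 => itComm s n * s (n + 1) - s (n + 1) * itComm s n

/-- `S` is Lie nilpotent of class ≤ m : every left-normed commutator of `m + 1`
elements of `S` vanishes. -/
def LieNilpotentClassLe {R : Type*} [Ring R] (S : Set R) (m : ℕ) : Prop :=
  ∀ s : ℕ → R, (∀ n, s n ∈ S) → itComm s m = 0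

/-- The Lie derived series of an additive subgroup `S` of a ring:
`D 0 = S`, `D (k+1)` = additive span of `[D k, D k]`. -/
def derSeries {R : Type*} [Ring R] (S : AddSubgroup R) : ℕ → AddSubgroup R
  | 0 => S
  | n + 1 => AddSubgroup.closure
      {x | ∃ a ∈ derSeries S n, ∃ b ∈ derSeries S n, x = a * b - b * a}

/-- `R^(−)_n`: the additive subgroup generated by all left-normed commutators of
`n` elements of `R`. -/
def lcs (R : Type*) [Ring R] (n : ℕ) : AddSubgroup R :=
  AddSubgroup.closure {x | ∃ s : ℕ → R, x = itComm s (n - 1)}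

/-- `R_n = R^(−)_n + R^(−)_n · R`, a two-sided ideal of `R`. -/
def Rn (R : Type*) [Ring R] (n : ℕ) : AddSubgroup R :=
  lcs R n ⊔ AddSubgroup.closure {x | ∃ c ∈ lcs R n, ∃ r : R, x = c * r}

/-- The additive span of `k`-fold products of elements of `S`. -/
def spanPow {R : Type*} [Ring R] (S : Set R) (k : ℕ) : AddSubgroup R :=
  AddSubgroup.closure {x | ∃ l : List R, l.length = k ∧ (∀ a ∈ l, a ∈ S) ∧ x = l.prod}

/-- `J` is nilpotent: all `k`-fold products of its elements vanish for some `k > 0`. -/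
def IsNilpotentSG {R : Type*} [Ring R] (J : AddSubgroup R) : Prop :=
  ∃ k : ℕ, 0 < k ∧ ∀ l : List R, l.length = k → (∀ a ∈ l, a ∈ J) → l.prod = 0

/-- `R` is semiprime: it has no nonzero nilpotent two-sided ideals. -/
def IsSemiprimeRing (R : Type*) [Ring R] : Prop :=
  ∀ J : AddSubgroup R, IsIdealSG J → IsNilpotentSG J → J = ⊥
/-
In a semiprime ring an element `a` of a one-sided ideal `I` that commutes with `I` is central:
for a left ideal, `[a, x] R a = 0` for all `x`, whence `[a, r] R [a, r] = 0`. If `I` has Lie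
nilpotency class at most `k + 2`, every commutator `c = [d, b]` of length `k + 2` in `I` is
therefore central, and so is `d c = [d, d b]`; then `c² = [d c, b] = 0`, and a central element
of square zero vanishes. So the class drops to `1`, and `I` itself is central.
-/

namespace IsSemiprimeRing

variable {R : Type*} [Ring R]

theorem eq_bot_of_mul_eq_zero (hR : IsSemiprimeRing R) {J : AddSubgroup R} (hJ : IsIdealSG J)
    (h : ∀ a ∈ J, ∀ b ∈ J, a * b = 0) : J = ⊥ :=
  hR J hJ ⟨2, two_pos, fun l hl hmem => by
    obtain ⟨a, b, rfl⟩ := List.length_eq_two.mp hl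
    simpa using h a (hmem a (by simp)) b (hmem b (by simp))⟩

/-- `A` is the right annihilator of `d R` and `K` the left annihilator of `A`;
`K ∩ A` is an ideal of square zero containing `d`. -/
theorem eq_zero_of_forall_mul_mul_eq_zero (hR : IsSemiprimeRing R) {d : R}
    (h : ∀ z, d * z * d = 0) : d = 0 := by
  let A : AddSubgroup R := ⨅ z : R, (AddMonoidHom.mulLeft (d * z)).ker
  let K : AddSubgroup R := ⨅ y ∈ A, (AddMonoidHom.mulRight y).ker
  have mem_A : ∀ y, y ∈ A ↔ ∀ z, d * z * y = 0 := by simp [A]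
  have mem_K : ∀ x, x ∈ K ↔ ∀ y ∈ A, x * y = 0 := by simp [K]
  have hA_left : ∀ y ∈ A, ∀ r, r * y ∈ A := fun y hy r =>
    (mem_A _).2 fun z => by rw [← mul_assoc, mul_assoc d, (mem_A y).1 hy]
  have hJ : IsIdealSG (K ⊓ A) := by
    constructor
    · rintro x ⟨hxK, hxA⟩ r
      refine ⟨(mem_K _).2 fun y hy => ?_, hA_left x hxA r⟩
      rw [mul_assoc, (mem_K x).1 hxK y hy, mul_zero]
    · rintro x ⟨hxK, hxA⟩ r
      refine ⟨(mem_K _).2 fun y hy => ?_, (mem_A _).2 fun z => ?_⟩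
      · rw [mul_assoc]
        exact (mem_K x).1 hxK _ (hA_left y hy r)
      · rw [← mul_assoc, (mem_A x).1 hxA, zero_mul]
  have hbot : K ⊓ A = ⊥ :=
    hR.eq_bot_of_mul_eq_zero hJ fun a ha b hb => (mem_K a).1 ha.1 b hb.2
  have hd : d ∈ K ⊓ A :=
    ⟨(mem_K d).2 fun y hy => by simpa using (mem_A y).1 hy 1, (mem_A d).2 h⟩
  simpa [hbot] using hd

theorem eq_zero_of_central_of_mul_self_eq_zero (hR : IsSemiprimeRing R) {c : R}
    (hc : ∀ r, c * r = r * c) (hcc : c * c = 0) : c = 0 :=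
  hR.eq_zero_of_forall_mul_mul_eq_zero fun z => by rw [hc, mul_assoc, hcc, mul_zero]

theorem central_of_mem_of_isLeftIdealSG (hR : IsSemiprimeRing R) {I : AddSubgroup R}
    (hI : IsLeftIdealSG I) {a : R} (ha : a ∈ I) (hcomm : ∀ j ∈ I, a * j = j * a) (r : R) :
    a * r = r * a := by
  rw [← sub_eq_zero]
  have h1 : ∀ x, (a * x - x * a) * a = 0 := fun x => by
    rw [sub_mul, sub_eq_zero, mul_assoc, hcomm _ (hI a ha x), mul_assoc]
  have h2 : ∀ x y, (a * x - x * a) * y * a = 0 := fun x y => by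
    have : (a * x - x * a) * y * a = (a * (x * y) - x * y * a) * a - x * ((a * y - y * a) * a) := by
      noncomm_ring
    rw [this, h1, h1, mul_zero, sub_zero]
  refine hR.eq_zero_of_forall_mul_mul_eq_zero fun z => ?_
  have : (a * r - r * a) * z * (a * r - r * a)
      = (a * r - r * a) * z * a * r - (a * r - r * a) * (z * r) * a := by
    noncomm_ring
  rw [this, h2, h2, zero_mul, sub_zero]

theorem central_of_mem_of_isRightIdealSG (hR : IsSemiprimeRing R) {I : AddSubgroup R}
    (hI : IsRightIdealSG I) {a : R} (ha : a ∈ I) (hcomm : ∀ j ∈ I, a * j = j * a) (r : R) :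
    a * r = r * a := by
  rw [← sub_eq_zero]
  have h1 : ∀ x, a * (a * x - x * a) = 0 := fun x => by
    rw [mul_sub, sub_eq_zero, hcomm _ (hI a ha x), mul_assoc]
  have h2 : ∀ x y, a * (x * (a * y - y * a)) = 0 := fun x y => by
    have : a * (x * (a * y - y * a)) = a * (a * (x * y) - x * y * a) - a * (a * x - x * a) * y := by
      noncomm_ring
    rw [this, h1, h1, zero_mul, sub_zero]
  refine hR.eq_zero_of_forall_mul_mul_eq_zero fun z => ?_
  have : (a * r - r * a) * z * (a * r - r * a)
      = a * (r * z * (a * r - r * a)) - r * (a * (z * (a * r - r * a))) := by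
    noncomm_ring
  rw [this, h2, h2, mul_zero, sub_zero]

theorem central_of_mem (hR : IsSemiprimeRing R) {I : AddSubgroup R}
    (hI : IsLeftIdealSG I ∨ IsRightIdealSG I) {a : R} (ha : a ∈ I)
    (hcomm : ∀ j ∈ I, a * j = j * a) (r : R) : a * r = r * a :=
  hI.elim (fun hL => hR.central_of_mem_of_isLeftIdealSG hL ha hcomm r)
    (fun hR' => hR.central_of_mem_of_isRightIdealSG hR' ha hcomm r)

end IsSemiprimeRing

theorem mul_mem_of_isLeftIdealSG_or_isRightIdealSG {R : Type*} [Ring R] {I : AddSubgroup R}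
    (hI : IsLeftIdealSG I ∨ IsRightIdealSG I) : ∀ a ∈ I, ∀ b ∈ I, a * b ∈ I :=
  hI.elim (fun hL _ _ b hb => hL b hb _) (fun hR a ha _ _ => hR a ha _)

section itComm

variable {R : Type*} [Ring R]

theorem itComm_congr {s t : ℕ → R} {n : ℕ} (h : ∀ k ≤ n, s k = t k) :
    itComm s n = itComm t n := by
  induction n with
  | zero => exact h 0 le_rfl
  | succ n ih =>
    simp only [itComm, ih fun k hk => h k (hk.trans n.le_succ), h (n + 1) le_rfl]

theorem itComm_update_succ (s : ℕ → R) (n : ℕ) (x : R) :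
    itComm (Function.update s (n + 1) x) (n + 1) = itComm s n * x - x * itComm s n := by
  have : itComm (Function.update s (n + 1) x) n = itComm s n :=
    itComm_congr fun k hk => Function.update_of_ne (by omega) _ _
  simp only [itComm, this, Function.update_self]

theorem itComm_mem {S : AddSubgroup R} (hS : ∀ a ∈ S, ∀ b ∈ S, a * b ∈ S) {s : ℕ → R}
    (hs : ∀ n, s n ∈ S) (n : ℕ) : itComm s n ∈ S := by
  induction n with
  | zero => exact hs 0
  | succ n ih => exact sub_mem (hS _ ih _ (hs _)) (hS _ (hs _) _ ih)

end itComm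

namespace LieNilpotentClassLe

variable {R : Type*} [Ring R] {S : Set R}

theorem succ {m : ℕ} (h : LieNilpotentClassLe S m) : LieNilpotentClassLe S (m + 1) :=
  fun s hs => by simp only [itComm, h s hs, zero_mul, mul_zero, sub_zero]

theorem itComm_mul_comm {n : ℕ} (h : LieNilpotentClassLe S (n + 1)) {s : ℕ → R}
    (hs : ∀ k, s k ∈ S) {x : R} (hx : x ∈ S) : itComm s n * x = x * itComm s n := by
  have hmem : ∀ k, Function.update s (n + 1) x k ∈ S :=
    (Function.forall_update_iff s fun _ y => y ∈ S).2 ⟨hx, fun k _ => hs k⟩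
  rw [← sub_eq_zero, ← itComm_update_succ]
  exact h _ hmem

end LieNilpotentClassLe

namespace IsSemiprimeRing

variable {R : Type*} [Ring R] {I : AddSubgroup R}

theorem itComm_central (hR : IsSemiprimeRing R) (hI : IsLeftIdealSG I ∨ IsRightIdealSG I)
    {n : ℕ} (h : LieNilpotentClassLe (I : Set R) (n + 1)) {s : ℕ → R} (hs : ∀ k, s k ∈ I)
    (r : R) : itComm s n * r = r * itComm s n :=
  hR.central_of_mem hI (itComm_mem (mul_mem_of_isLeftIdealSG_or_isRightIdealSG hI) hs n)
    (fun _ hj => h.itComm_mul_comm hs hj) r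

theorem lieNilpotentClassLe_of_succ (hR : IsSemiprimeRing R)
    (hI : IsLeftIdealSG I ∨ IsRightIdealSG I) {k : ℕ}
    (h : LieNilpotentClassLe (I : Set R) (k + 2)) : LieNilpotentClassLe (I : Set R) (k + 1) := by
  intro s hs
  have hmul := mul_mem_of_isLeftIdealSG_or_isRightIdealSG hI
  set d := itComm s k
  set b := s (k + 1)
  obtain ⟨c, hc⟩ : ∃ c, c = d * b - b * d := ⟨_, rfl⟩
  have hc_central : ∀ r, c * r = r * c := fun r => by
    rw [hc]; exact hR.itComm_central hI h hs r
  have hdc_central : ∀ r, d * c * r = r * (d * c) := by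
    have hmem : ∀ n, Function.update s (k + 1) (d * b) n ∈ I :=
      (Function.forall_update_iff s fun _ y => y ∈ I).2
        ⟨hmul _ (itComm_mem hmul hs k) _ (hs _), fun n _ => hs n⟩
    have hdc : d * c = itComm (Function.update s (k + 1) (d * b)) (k + 1) := by
      rw [itComm_update_succ, hc]; noncomm_ring
    simpa only [hdc] using hR.itComm_central hI h hmem
  have hsq : c * c = 0 :=
    calc c * c = c * d * b - c * b * d := by rw [hc]; noncomm_ring
      _ = d * c * b - b * (d * c) := by rw [hc_central d, hc_central b, mul_assoc b, hc_central d]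
      _ = 0 := by rw [hdc_central b, sub_self]
  show itComm s k * s (k + 1) - s (k + 1) * itComm s k = 0
  rw [← hc]
  exact hR.eq_zero_of_central_of_mul_self_eq_zero hc_central hsq

theorem lieNilpotentClassLe_one (hR : IsSemiprimeRing R)
    (hI : IsLeftIdealSG I ∨ IsRightIdealSG I) {m : ℕ}
    (h : LieNilpotentClassLe (I : Set R) (m + 1)) : LieNilpotentClassLe (I : Set R) 1 := by
  induction m with
  | zero => exact h
  | succ m ih => exact ih (hR.lieNilpotentClassLe_of_succ hI h)

end IsSemiprimeRing

/-- **Corollary 2, first part.** In a semiprime ring every Lie nilpotent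
one-sided ideal is contained in the center. -/
theorem semiprime_lie_nilpotent_ideal_central {R : Type*} [Ring R]
    (hsp : IsSemiprimeRing R)
    (I : AddSubgroup R) (hI : IsLeftIdealSG I ∨ IsRightIdealSG I)
    (hnil : ∃ m, LieNilpotentClassLe (I : Set R) m) :
    ∀ i ∈ I, ∀ r : R, i * r = r * i := by
  obtain ⟨m, hm⟩ := hnil
  have h1 : LieNilpotentClassLe (I : Set R) 1 := hsp.lieNilpotentClassLe_one hI hm.succ
  intro i hi r
  exact hsp.itComm_central hI h1 (s := fun _ => i) (fun _ => hi) r
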